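/- Let (V₀, ω₀) and (V₁, ω₁) be finite-dimensional symplectic vector spaces over a field of characteristic ≠ 2, let L ⊆ V₀ × V₁ be a Lagrangian subspace with respect to (-ω₀) ⊕ ω₁, and let N ⊆ V₀ be a Lagrangian subspace of (V₀, ω₀). Then L(N) = {v₁ ∈ V₁ : ∃ v₀ ∈ N, (v₀, v₁) ∈ L} is a Lagrangian subspace of (V₁, ω₁). -/

import Mathlib

def symplOrth {k V : Type*} [Field k] [AddCommGroup V] [Module k V]
    (ω : V →ₗ[k] V →ₗ[k] k) (L : Submodule k V) : Submodule k V where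
  carrier := {v | ∀ l ∈ L, ω v l = 0}
  add_mem' := by
    intro a b ha hb l hl
    simp [map_add, ha l hl, hb l hl]
  zero_mem' := by
    intro l hl
    simp
  smul_mem' := by
    intro c a ha l hl
    simp [map_smul, ha l hl]

def IsLagrangian {k V : Type*} [Field k] [AddCommGroup V] [Module k V]
    (ω : V →ₗ[k] V →ₗ[k] k) (L : Submodule k V) : Prop :=
  L = symplOrth ω L

def prodForm {k V₀ V₁ : Type*} [Field k] [AddCommGroup V₀] [Module k V₀]
    [AddCommGroup V₁] [Module k V₁]
    (ω₀ : V₀ →ₗ[k] V₀ →ₗ[k] k) (ω₁ : V₁ →ₗ[k] V₁ →ₗ[k] k) :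
    (V₀ × V₁) →ₗ[k] (V₀ × V₁) →ₗ[k] k :=
  LinearMap.mk₂ k (fun u v => ω₀ u.1 v.1 + ω₁ u.2 v.2)
    (fun u u' v => by simp [map_add]; ring)
    (fun c u v => by simp [map_smul]; ring)
    (fun u v v' => by simp [map_add]; ring)
    (fun c u v => by simp [map_smul]; ring)

def pushRel {k V₀ V₁ : Type*} [Field k]
    [AddCommGroup V₀] [Module k V₀] [AddCommGroup V₁] [Module k V₁]
    (L : Submodule k (V₀ × V₁)) (N : Submodule k V₀) : Submodule k V₁ where
  carrier := {v₁ | ∃ v₀ ∈ N, (v₀, v₁) ∈ L}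
  add_mem' := by
    rintro a b ⟨x, hx, hxa⟩ ⟨y, hy, hyb⟩
    exact ⟨x + y, N.add_mem hx hy, L.add_mem hxa hyb⟩
  zero_mem' := ⟨0, N.zero_mem, L.zero_mem⟩
  smul_mem' := by
    rintro c a ⟨x, hx, hxa⟩
    exact ⟨c • x, N.smul_mem c hx, L.smul_mem c hxa⟩

/-!
Write `Ω = (-ω₀) ⊕ ω₁`. Since `(N × 0)^Ω = N^ω₀ × V₁`, the coisotropic subspace
`(L ⊔ N × 0)^Ω` equals `L ⊓ (N × V₁)`, so by nondegeneracy `L ⊔ N × 0 = (L ⊓ (N × V₁))^Ω`.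
Intersecting both sides with `0 × V₁` gives `L(N)` on the left and `L(N)^ω₁` on the right.
-/

section SymplecticOrthogonal

variable {k V : Type*} [Field k] [AddCommGroup V] [Module k V]

theorem mem_symplOrth_iff_le_ker {ω : V →ₗ[k] V →ₗ[k] k} {L : Submodule k V} {v : V} :
    v ∈ symplOrth ω L ↔ L ≤ LinearMap.ker (ω v) :=
  Iff.rfl

theorem symplOrth_sup (ω : V →ₗ[k] V →ₗ[k] k) (A B : Submodule k V) :
    symplOrth ω (A ⊔ B) = symplOrth ω A ⊓ symplOrth ω B := by
  ext v
  simp only [Submodule.mem_inf, mem_symplOrth_iff_le_ker, sup_le_iff]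

theorem symplOrth_neg (ω : V →ₗ[k] V →ₗ[k] k) (L : Submodule k V) :
    symplOrth (-ω) L = symplOrth ω L := by
  ext v
  simp only [mem_symplOrth_iff_le_ker, LinearMap.neg_apply, LinearMap.ker_neg]

theorem symplOrth_eq_orthogonal {ω : V →ₗ[k] V →ₗ[k] k} (hω : ω.IsRefl) (L : Submodule k V) :
    symplOrth ω L = LinearMap.BilinForm.orthogonal ω L := by
  ext v
  exact ⟨fun hv l hl => hω v l (hv l hl), fun hv l hl => hω l v (hv l hl)⟩

theorem symplOrth_symplOrth [FiniteDimensional k V] {ω : V →ₗ[k] V →ₗ[k] k}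
    (hrefl : ω.IsRefl) (hsep : ω.SeparatingLeft) (L : Submodule k V) :
    symplOrth ω (symplOrth ω L) = L := by
  rw [symplOrth_eq_orthogonal hrefl, symplOrth_eq_orthogonal hrefl]
  exact LinearMap.BilinForm.orthogonal_orthogonal
    (hrefl.nondegenerate_iff_separatingLeft.mpr hsep) hrefl L

end SymplecticOrthogonal

section ProductForm

variable {k V₀ V₁ : Type*} [Field k] [AddCommGroup V₀] [Module k V₀]
  [AddCommGroup V₁] [Module k V₁] {ω₀ : V₀ →ₗ[k] V₀ →ₗ[k] k} {ω₁ : V₁ →ₗ[k] V₁ →ₗ[k] k}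

@[simp]
theorem prodForm_apply (u v : V₀ × V₁) : prodForm ω₀ ω₁ u v = ω₀ u.1 v.1 + ω₁ u.2 v.2 :=
  rfl

theorem prodForm_isAlt (h₀ : ω₀.IsAlt) (h₁ : ω₁.IsAlt) : (prodForm ω₀ ω₁).IsAlt := by
  intro v
  simp [h₀ v.1, h₁ v.2]

theorem prodForm_separatingLeft (h₀ : ω₀.SeparatingLeft) (h₁ : ω₁.SeparatingLeft) :
    (prodForm ω₀ ω₁).SeparatingLeft := by
  intro v hv
  refine Prod.ext (h₀ v.1 fun w => ?_) (h₁ v.2 fun w => ?_)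
  · simpa using hv (w, 0)
  · simpa using hv (0, w)

theorem symplOrth_prodForm_prod_bot (N : Submodule k V₀) :
    symplOrth (prodForm ω₀ ω₁) (N.prod ⊥) = (symplOrth ω₀ N).prod ⊤ := by
  ext ⟨v₀, v₁⟩
  simp [symplOrth, Submodule.mem_prod]

theorem pushRel_eq_comap_inr (L : Submodule k (V₀ × V₁)) (N : Submodule k V₀) :
    pushRel L N = (L ⊔ N.prod ⊥).comap (LinearMap.inr k V₀ V₁) := by
  ext w
  simp only [Submodule.mem_comap, LinearMap.inr_apply, Submodule.mem_sup, Submodule.mem_prod,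
    Submodule.mem_bot]
  constructor
  · rintro ⟨v₀, hv₀, hv⟩
    exact ⟨(v₀, w), hv, (-v₀, 0), ⟨N.neg_mem hv₀, rfl⟩, by simp⟩
  · rintro ⟨u, hu, n, ⟨hn, hn₂⟩, hsum⟩
    obtain ⟨hu₁, hu₂⟩ := Prod.ext_iff.mp hsum
    refine ⟨u.1, ?_, ?_⟩
    · rw [eq_neg_of_add_eq_zero_left hu₁]
      exact N.neg_mem hn
    · rwa [show (u.1, w) = u from Prod.ext rfl (by simpa [hn₂] using hu₂.symm)]

theorem symplOrth_pushRel (L : Submodule k (V₀ × V₁)) (N : Submodule k V₀) :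
    symplOrth ω₁ (pushRel L N) =
      (symplOrth (prodForm ω₀ ω₁) (L ⊓ N.prod ⊤)).comap (LinearMap.inr k V₀ V₁) := by
  ext w
  constructor
  · rintro hw ⟨v₀, v₁⟩ ⟨hv, hv₀, -⟩
    simpa using hw v₁ ⟨v₀, hv₀, hv⟩
  · rintro hw v₁ ⟨v₀, hv₀, hv⟩
    simpa using hw (v₀, v₁) ⟨hv, hv₀, trivial⟩

end ProductForm

theorem pushRel_isLagrangian_general {k V₀ V₁ : Type*} [Field k]
    [AddCommGroup V₀] [Module k V₀] [FiniteDimensional k V₀]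
    [AddCommGroup V₁] [Module k V₁] [FiniteDimensional k V₁]
    (ω₀ : V₀ →ₗ[k] V₀ →ₗ[k] k) (ω₁ : V₁ →ₗ[k] V₁ →ₗ[k] k)
    (halt₀ : ∀ v, ω₀ v v = 0) (hnondeg₀ : ∀ v, (∀ w, ω₀ v w = 0) → v = 0)
    (halt₁ : ∀ v, ω₁ v v = 0) (hnondeg₁ : ∀ v, (∀ w, ω₁ v w = 0) → v = 0)
    (L : Submodule k (V₀ × V₁)) (hL : IsLagrangian (prodForm (-ω₀) ω₁) L)
    (N : Submodule k V₀) (hN : IsLagrangian ω₀ N) :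
    IsLagrangian ω₁ (pushRel L N) := by
  have hΩalt : (prodForm (-ω₀) ω₁).IsAlt :=
    prodForm_isAlt (fun v => by simp [halt₀ v]) halt₁
  have hΩsep : (prodForm (-ω₀) ω₁).SeparatingLeft :=
    prodForm_separatingLeft (fun v hv => hnondeg₀ v fun w => neg_eq_zero.mp (hv w)) hnondeg₁
  have hcoiso : symplOrth (prodForm (-ω₀) ω₁) (L ⊔ N.prod ⊥) = L ⊓ N.prod ⊤ := by
    rw [symplOrth_sup, symplOrth_prodForm_prod_bot, symplOrth_neg, ← hL, ← hN]
  rw [IsLagrangian, symplOrth_pushRel, ← hcoiso, symplOrth_symplOrth hΩalt.isRefl hΩsep,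
    pushRel_eq_comap_inr]

/-- A Lagrangian correspondence maps Lagrangians to Lagrangians. -/
theorem pushRel_isLagrangian {k V₀ V₁ : Type*} [Field k]
    [AddCommGroup V₀] [Module k V₀] [FiniteDimensional k V₀]
    [AddCommGroup V₁] [Module k V₁] [FiniteDimensional k V₁]
    (h2 : (2 : k) ≠ 0)
    (ω₀ : V₀ →ₗ[k] V₀ →ₗ[k] k) (ω₁ : V₁ →ₗ[k] V₁ →ₗ[k] k)
    (halt₀ : ∀ v, ω₀ v v = 0) (hnondeg₀ : ∀ v, (∀ w, ω₀ v w = 0) → v = 0)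
    (halt₁ : ∀ v, ω₁ v v = 0) (hnondeg₁ : ∀ v, (∀ w, ω₁ v w = 0) → v = 0)
    (L : Submodule k (V₀ × V₁)) (hL : IsLagrangian (prodForm (-ω₀) ω₁) L)
    (N : Submodule k V₀) (hN : IsLagrangian ω₀ N) :
    IsLagrangian ω₁ (pushRel L N) :=
  pushRel_isLagrangian_general ω₀ ω₁ halt₀ hnondeg₀ halt₁ hnondeg₁ L hL N hN
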